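/- Let n, m and m' be nonnegative integers such that n+m and n+m' are both odd and m ≥ m'. Then the partisan chocolate game position PC(n,m) is less than or equal to PC(n,m') in the normal-play game order. -/

import Mathlib

/-!
Chocolate positions are totally preordered by `PC.rank`: positions with `n + m` even lie below
those with `n + m` odd, and `⌊n/2⌋ + ⌊m/2⌋` increases along the even ones and decreases along the
odd ones. Left moves strictly lower the rank and Right moves strictly raise it, and whenever
`rank y < rank x` either `x` has a Left option or `y` a Right option whose rank lies between.
Induction on `n + m + p + q` then gives `PC n m ≤ PC p q ↔ rank n m ≤ rank p q`.
-/

universe u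

namespace SetTheory

/-- Pre-games, as `SetTheory.PGame` was defined in Mathlib (removed from current Mathlib). -/
inductive PGame : Type (u + 1)
  | mk : ∀ α β : Type u, (α → PGame) → (β → PGame) → PGame

namespace PGame

/-- The pair (`≤`, `⧏`) of the old Mathlib definition `SetTheory.PGame.le_lf`. -/
noncomputable def leLF (x : PGame.{u}) : PGame.{u} → Prop × Prop :=
  x.rec (motive := fun _ => PGame.{u} → Prop × Prop) fun _ _ _ _ ihL ihR y =>
    y.rec (motive := fun _ => Prop × Prop) fun yl yr yL yR jhL jhR =>
      ((∀ i, (ihL i (mk yl yr yL yR)).2) ∧ ∀ j, (jhR j).2,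
        (∃ i, (jhL i).1) ∨ ∃ j, (ihR j (mk yl yr yL yR)).1)

noncomputable instance : LE PGame.{u} :=
  ⟨fun x y => (leLF x y).1⟩

end PGame

end SetTheory

open SetTheory

/-- The partisan chocolate game position `PC n m`.
Left options: `PC n' m` with `n' < n` and `n' + m` even, and `PC n m'` with `m' < m` and
`n + m'` even. Right options: the same with "odd" in place of "even". -/
def PC : ℕ → ℕ → SetTheory.PGame
  | n, m =>
    SetTheory.PGame.mk
      {p : ℕ × ℕ // (p.2 = m ∧ p.1 < n ∧ Even (p.1 + m)) ∨ (p.1 = n ∧ p.2 < m ∧ Even (n + p.2))}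
      {p : ℕ × ℕ // (p.2 = m ∧ p.1 < n ∧ Odd (p.1 + m)) ∨ (p.1 = n ∧ p.2 < m ∧ Odd (n + p.2))}
      (fun p => PC p.1.1 p.1.2)
      (fun p => PC p.1.1 p.1.2)
termination_by n m => n + m
decreasing_by
  all_goals rcases p.2 with ⟨h1, h2, -⟩ | ⟨h1, h2, -⟩ <;> omega

namespace SetTheory.PGame

def LF (x y : PGame.{u}) : Prop := (leLF x y).2

infix:50 " ⧏ " => SetTheory.PGame.LF

variable {xl xr yl yr : Type u} {xL : xl → PGame.{u}} {xR : xr → PGame.{u}}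
  {yL : yl → PGame.{u}} {yR : yr → PGame.{u}}

theorem mk_le_mk :
    mk xl xr xL xR ≤ mk yl yr yL yR ↔
      (∀ i, xL i ⧏ mk yl yr yL yR) ∧ ∀ j, mk xl xr xL xR ⧏ yR j :=
  Iff.rfl

theorem mk_lf_mk :
    mk xl xr xL xR ⧏ mk yl yr yL yR ↔
      (∃ i, mk xl xr xL xR ≤ yL i) ∨ ∃ j, xR j ≤ mk yl yr yL yR :=
  Iff.rfl

theorem not_le_lf (x y : PGame.{u}) : (¬ x ≤ y ↔ y ⧏ x) ∧ (¬ x ⧏ y ↔ y ≤ x) := by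
  induction x generalizing y with
  | mk xl xr xL xR ihL ihR =>
    induction y with
    | mk yl yr yL yR jhL jhR =>
      simp only [mk_le_mk, mk_lf_mk, not_and_or, not_or, not_forall, not_exists,
        fun i => (ihL i (mk yl yr yL yR)).2, fun j => (ihR j (mk yl yr yL yR)).1,
        fun i => (jhL i).1, fun j => (jhR j).2, and_self]

theorem not_le {x y : PGame.{u}} : ¬ x ≤ y ↔ y ⧏ x := (not_le_lf x y).1

end SetTheory.PGame

open SetTheory PGame

namespace PC

def IsLeftMove (n m a b : ℕ) : Prop :=
  (b = m ∧ a < n ∧ Even (a + m)) ∨ (a = n ∧ b < m ∧ Even (n + b))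

def IsRightMove (n m a b : ℕ) : Prop :=
  (b = m ∧ a < n ∧ Odd (a + m)) ∨ (a = n ∧ b < m ∧ Odd (n + b))

theorem eq_mk (n m : ℕ) :
    PC n m = mk {x : ℕ × ℕ // IsLeftMove n m x.1 x.2} {x : ℕ × ℕ // IsRightMove n m x.1 x.2}
      (fun x => PC x.1.1 x.1.2) (fun x => PC x.1.1 x.1.2) := by
  rw [PC]
  rfl

theorem le_iff_forall_lf (n m p q : ℕ) :
    PC n m ≤ PC p q ↔
      (∀ a b, IsLeftMove n m a b → PC a b ⧏ PC p q) ∧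
        ∀ a b, IsRightMove p q a b → PC n m ⧏ PC a b := by
  rw [eq_mk n m, eq_mk p q]
  exact ⟨fun ⟨hL, hR⟩ => ⟨fun a b h => hL ⟨(a, b), h⟩, fun a b h => hR ⟨(a, b), h⟩⟩,
    fun ⟨hL, hR⟩ => ⟨fun i => hL _ _ i.2, fun j => hR _ _ j.2⟩⟩

def rank (n m : ℕ) : ℕ ×ₗ ℤ :=
  if Even (n + m) then toLex (0, n / 2 + m / 2) else toLex (1, -(n / 2 + m / 2))

theorem rank_le_rank_iff {n m p q : ℕ} :
    rank n m ≤ rank p q ↔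
      (n + m) % 2 = 0 ∧ (p + q) % 2 = 1 ∨
      (n + m) % 2 = 0 ∧ (p + q) % 2 = 0 ∧ n / 2 + m / 2 ≤ p / 2 + q / 2 ∨
      (n + m) % 2 = 1 ∧ (p + q) % 2 = 1 ∧ p / 2 + q / 2 ≤ n / 2 + m / 2 := by
  unfold rank
  split_ifs <;> simp only [Prod.Lex.toLex_le_toLex, Nat.even_iff, true_and] at * <;> omega

namespace IsLeftMove

variable {n m a b : ℕ}

theorem fst (h : a < n) (he : Even (a + m)) : IsLeftMove n m a m := Or.inl ⟨rfl, h, he⟩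

theorem snd (h : b < m) (he : Even (n + b)) : IsLeftMove n m n b := Or.inr ⟨rfl, h, he⟩

theorem add_lt (h : IsLeftMove n m a b) : a + b < n + m := by
  rcases h with ⟨rfl, h, -⟩ | ⟨rfl, h, -⟩ <;> omega

theorem rank_lt (h : IsLeftMove n m a b) : rank a b < rank n m := by
  rw [lt_iff_not_ge, rank_le_rank_iff]
  rcases h with ⟨rfl, h, he⟩ | ⟨rfl, h, he⟩ <;> rw [Nat.even_iff] at he <;> omega

end IsLeftMove

namespace IsRightMove

variable {n m a b : ℕ}

theorem fst (h : a < n) (ho : Odd (a + m)) : IsRightMove n m a m := Or.inl ⟨rfl, h, ho⟩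

theorem snd (h : b < m) (ho : Odd (n + b)) : IsRightMove n m n b := Or.inr ⟨rfl, h, ho⟩

theorem add_lt (h : IsRightMove n m a b) : a + b < n + m := by
  rcases h with ⟨rfl, h, -⟩ | ⟨rfl, h, -⟩ <;> omega

theorem rank_lt (h : IsRightMove n m a b) : rank n m < rank a b := by
  rw [lt_iff_not_ge, rank_le_rank_iff]
  rcases h with ⟨rfl, h, ho⟩ | ⟨rfl, h, ho⟩ <;> rw [Nat.odd_iff] at ho <;> omega

end IsRightMove

theorem exists_move_of_rank_lt {n m p q : ℕ} (h : rank p q < rank n m) :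
    (∃ a b, IsLeftMove n m a b ∧ rank p q ≤ rank a b) ∨
      ∃ a b, IsRightMove p q a b ∧ rank a b ≤ rank n m := by
  rw [lt_iff_not_ge, rank_le_rank_iff] at h
  simp only [rank_le_rank_iff]
  rcases Nat.mod_two_eq_zero_or_one (n + m) with hnm | hnm <;>
    rcases Nat.mod_two_eq_zero_or_one (p + q) with hpq | hpq
  · left
    by_cases hn : 2 ≤ n
    · exact ⟨n - 2, m, .fst (by omega) (Nat.even_iff.2 (by omega)), by omega⟩
    · exact ⟨n, m - 2, .snd (by omega) (Nat.even_iff.2 (by omega)), by omega⟩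
  · omega
  · by_cases hle : p / 2 + q / 2 ≤ n / 2 + m / 2
    · left
      by_cases hn : n % 2 = 1
      · exact ⟨n - 1, m, .fst (by omega) (Nat.even_iff.2 (by omega)), by omega⟩
      · exact ⟨n, m - 1, .snd (by omega) (Nat.even_iff.2 (by omega)), by omega⟩
    · right
      by_cases hp : 1 ≤ p
      · exact ⟨p - 1, q, .fst (by omega) (Nat.odd_iff.2 (by omega)), by omega⟩
      · exact ⟨p, q - 1, .snd (by omega) (Nat.odd_iff.2 (by omega)), by omega⟩
  · right
    by_cases hp : 2 ≤ p
    · exact ⟨p - 2, q, .fst (by omega) (Nat.odd_iff.2 (by omega)), by omega⟩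
    · exact ⟨p, q - 2, .snd (by omega) (Nat.odd_iff.2 (by omega)), by omega⟩

theorem le_iff_rank_le (n m p q : ℕ) : PC n m ≤ PC p q ↔ rank n m ≤ rank p q := by
  rw [le_iff_forall_lf]
  constructor
  · rintro ⟨hL, hR⟩
    by_contra! hlt
    rcases exists_move_of_rank_lt hlt with ⟨a, b, hab, hle⟩ | ⟨a, b, hab, hle⟩
    · exact not_le.2 (hL a b hab) ((le_iff_rank_le p q a b).2 hle)
    · exact not_le.2 (hR a b hab) ((le_iff_rank_le a b n m).2 hle)
  · intro hle
    refine ⟨fun a b hab => ?_, fun a b hab => ?_⟩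
    · rw [← not_le, le_iff_rank_le p q a b]
      exact (hab.rank_lt.trans_le hle).not_ge
    · rw [← not_le, le_iff_rank_le a b n m]
      exact (hle.trans_lt hab.rank_lt).not_ge
termination_by n + m + p + q
decreasing_by all_goals have := hab.add_lt; omega

end PC

theorem stmt_2 (n m m' : ℕ) (hm : Odd (n + m)) (hm' : Odd (n + m')) (h : m' ≤ m) :
    PC n m ≤ PC n m' := by
  rw [PC.le_iff_rank_le, PC.rank_le_rank_iff]
  rw [Nat.odd_iff] at hm hm'
  omega
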